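/- arXiv:1904.00342 — 2 statements merged into one kernel-verified Lean document; each statement's English description precedes it below -/
import Mathlib

section
/- Let $0<\lambda<1$. If a real sequence $(\alpha_m)_{m\geq 1}$ satisfies $\sum_{m\geq 1} \lambda^{2m}(\alpha_{m+1}-\alpha_m)^2 < \infty$, then $\sum_{m\geq 1} \lambda^{2m}\alpha_m^2 < \infty$, and moreover there is a constant $C$ depending only on $\lambda$ such that $\big(\sum_{m\geq 1}\lambda^{2m}\alpha_m^2\big)^{1/2} \leq C\big(|\alpha_1| + \big(\sum_{m\geq 1}\lambda^{2m}(\alpha_{m+1}-\alpha_m)^2\big)^{1/2}\big).$ -/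
/-!
Young's inequality gives `λ²(x + y)² ≤ λ x² + λ²/(1-λ) y²`, so the weighted squares
`f m = λ^{2m} α_m²` obey `f (m+1) ≤ λ f m + λ²/(1-λ) g m`, where `g m = λ^{2m} (α_{m+1} - α_m)²`.
Since `λ < 1`, summing this recursion bounds `(1 - λ) ∑ f` by `f 1 + λ²/(1-λ) ∑ g`; as
`f 1 = λ² α_1²`, this gives the claim with `C = λ/(1-λ)`.
-/

open Finset

lemma sq_mul_add_sq_le {lam : ℝ} (h0 : 0 ≤ lam) (h1 : lam < 1) (x y : ℝ) :
    lam ^ 2 * (x + y) ^ 2 ≤ lam * x ^ 2 + lam ^ 2 / (1 - lam) * y ^ 2 := by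
  have hpos : 0 < 1 - lam := by linarith
  have key : lam * x ^ 2 + lam ^ 2 / (1 - lam) * y ^ 2 - lam ^ 2 * (x + y) ^ 2 =
      lam / (1 - lam) * ((1 - lam) * x - lam * y) ^ 2 := by
    field_simp
    ring
  have : 0 ≤ lam / (1 - lam) * ((1 - lam) * x - lam * y) ^ 2 := by positivity
  linarith

section Recursion

variable {μ : ℝ} {f g : ℕ → ℝ}

lemma sum_range_le_of_le_mul_add (hμ : 0 ≤ μ) (hf : ∀ n, 0 ≤ f n) (hg : ∀ n, 0 ≤ g n)
    (hgs : Summable g) (hrec : ∀ n, f (n + 1) ≤ μ * f n + g n) (N : ℕ) :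
    (1 - μ) * ∑ n ∈ range N, f n ≤ f 0 + ∑' n, g n := by
  cases N with
  | zero => simpa using add_nonneg (hf 0) (tsum_nonneg hg)
  | succ N =>
    have hshift : ∑ n ∈ range N, f (n + 1) ≤ μ * ∑ n ∈ range N, f n + ∑ n ∈ range N, g n := by
      rw [mul_sum, ← sum_add_distrib]
      exact sum_le_sum fun n _ => hrec n
    have hmono : ∑ n ∈ range N, f n ≤ ∑ n ∈ range (N + 1), f n :=
      sum_le_sum_of_subset_of_nonneg (range_subset_range.mpr N.le_succ) fun n _ _ => hf n
    have hg_le : ∑ n ∈ range N, g n ≤ ∑' n, g n := hgs.sum_le_tsum _ fun n _ => hg n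
    rw [sum_range_succ'] at hmono ⊢
    nlinarith

lemma summable_and_tsum_le_of_le_mul_add (hμ0 : 0 ≤ μ) (hμ1 : μ < 1) (hf : ∀ n, 0 ≤ f n)
    (hg : ∀ n, 0 ≤ g n) (hgs : Summable g) (hrec : ∀ n, f (n + 1) ≤ μ * f n + g n) :
    Summable f ∧ ∑' n, f n ≤ (f 0 + ∑' n, g n) / (1 - μ) := by
  have hbound (N : ℕ) : ∑ n ∈ range N, f n ≤ (f 0 + ∑' n, g n) / (1 - μ) := by
    rw [le_div_iff₀ (by linarith), mul_comm]
    exact sum_range_le_of_le_mul_add hμ0 hf hg hgs hrec N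
  have hfs : Summable f := summable_of_sum_range_le hf hbound
  exact ⟨hfs, hfs.tsum_le_of_sum_range_le hbound⟩

end Recursion

lemma sqrt_le_mul_abs_add_sqrt {a C x T : ℝ} (hC : 0 ≤ C) (hT : 0 ≤ T)
    (h : a ≤ C ^ 2 * (x ^ 2 + T)) : √a ≤ C * (|x| + √T) := by
  have hsq : x ^ 2 + T ≤ (|x| + √T) ^ 2 := by
    nlinarith [sq_abs x, Real.sq_sqrt hT, abs_nonneg x, Real.sqrt_nonneg T]
  calc √a ≤ √((C * (|x| + √T)) ^ 2) := Real.sqrt_le_sqrt (by nlinarith)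
    _ = C * (|x| + √T) := Real.sqrt_sq (by positivity)

lemma weighted_sq_succ_le {lam : ℝ} (h0 : 0 ≤ lam) (h1 : lam < 1) (α : ℕ → ℝ) (m : ℕ) :
    lam ^ (2 * (m + 1 + 1)) * α (m + 1 + 1) ^ 2 ≤
      lam * (lam ^ (2 * (m + 1)) * α (m + 1) ^ 2) +
        lam ^ 2 / (1 - lam) * (lam ^ (2 * (m + 1)) * (α (m + 2) - α (m + 1)) ^ 2) := by
  have hstep := mul_le_mul_of_nonneg_left
    (sq_mul_add_sq_le h0 h1 (α (m + 1)) (α (m + 2) - α (m + 1)))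
    (pow_nonneg h0 (2 * (m + 1)))
  rw [add_sub_cancel] at hstep
  calc lam ^ (2 * (m + 1 + 1)) * α (m + 1 + 1) ^ 2
      = lam ^ (2 * (m + 1)) * (lam ^ 2 * α (m + 2) ^ 2) := by ring
    _ ≤ _ := hstep
    _ = _ := by ring

/-- Lemma 3.4(a), subcritical case `λ < 1`: if the weighted differences of a sequence are
square-summable then so is the weighted sequence itself, with a norm bound depending only
on `λ`. Sequences are 1-indexed: `α (m+1)` represents `α_{m+1}` for `m : ℕ`. -/
theorem stmt_0 (lam : ℝ) (h0 : 0 < lam) (h1 : lam < 1) :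
    ∃ C : ℝ, 0 < C ∧ ∀ α : ℕ → ℝ,
      Summable (fun m : ℕ => lam ^ (2 * (m + 1)) * (α (m + 2) - α (m + 1)) ^ 2) →
      Summable (fun m : ℕ => lam ^ (2 * (m + 1)) * (α (m + 1)) ^ 2) ∧
      Real.sqrt (∑' m : ℕ, lam ^ (2 * (m + 1)) * (α (m + 1)) ^ 2) ≤
        C * (|α 1| +
          Real.sqrt (∑' m : ℕ, lam ^ (2 * (m + 1)) * (α (m + 2) - α (m + 1)) ^ 2)) := by
  have hpos : 0 < 1 - lam := by linarith
  refine ⟨lam / (1 - lam), by positivity, fun α hgs => ?_⟩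
  set T := ∑' m : ℕ, lam ^ (2 * (m + 1)) * (α (m + 2) - α (m + 1)) ^ 2
  have hT : 0 ≤ T := tsum_nonneg fun m => by positivity
  obtain ⟨hfs, hle⟩ := summable_and_tsum_le_of_le_mul_add
    (f := fun m => lam ^ (2 * (m + 1)) * α (m + 1) ^ 2) h0.le h1 (fun m => by positivity) (fun m => by positivity) (hgs.mul_left (lam ^ 2 / (1 - lam)))
    (weighted_sq_succ_le h0.le h1 α)
  refine ⟨hfs, sqrt_le_mul_abs_add_sqrt (by positivity) hT ?_⟩
  have hα1 : lam ^ 2 * α 1 ^ 2 * (1 - lam) ≤ lam ^ 2 * α 1 ^ 2 := by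
    nlinarith [mul_nonneg (sq_nonneg lam) (sq_nonneg (α 1))]
  calc _ ≤ (lam ^ 2 * α 1 ^ 2 + lam ^ 2 / (1 - lam) * T) / (1 - lam) := by
        simpa only [zero_add, mul_one, tsum_mul_left] using hle
    _ ≤ (lam / (1 - lam)) ^ 2 * (α 1 ^ 2 + T) := by
        rw [div_le_iff₀ hpos]
        field_simp
        nlinarith
end

section
/- Let $\lambda = 1$ and consider the sequence spaces $\tilde S = \ell^2$ and $S = \{\alpha : (\alpha_{m+1}-\alpha_m)_{m\geq 1} \in \ell^2\}$ with norm $\|\alpha\|_S = |\alpha_1| + \|(\alpha_{m+1}-\alpha_m)\|_{\ell^2}$. Then $\ell^2 \subseteq S$, $\ell^2$ is dense in $S$, but $\ell^2$ is not closed in $S$ (i.e., there is a sequence in $\ell^2$ converging in the $S$-norm to an element of $S \setminus \ell^2$). -/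
/-!
A sequence `α` with square-summable differences is the `Snorm`-limit of the finitely supported
sequences `α - γ`, where `γ 0 = 0` and `γ = α` from `N + K` on: `γ` is `α - α N` beyond `N`,
whose differences are those of `α` beyond `N` (small in `ℓ²` for large `N`), plus `α N` times the
ramp `min 1 (m / K)`, whose differences `α N / K` on `[0, K)` have `ℓ²` mass `(α N)² / K`.
The constant sequence `1` has zero differences but is not square-summable.
-/

open Filter Topology fwdDiff

/-- The `S`-norm at the critical weight `λ = 1`:
`‖γ‖_S = |γ₁| + ‖(γ_{m+1} - γ_m)‖_{ℓ²}` (0-indexed: `γ 0` is the first entry). -/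
noncomputable def Snorm (γ : ℕ → ℝ) : ℝ :=
  |γ 0| + Real.sqrt (∑' m : ℕ, (γ (m + 1) - γ m) ^ 2)

lemma Snorm_nonneg (γ : ℕ → ℝ) : 0 ≤ Snorm γ :=
  add_nonneg (abs_nonneg _) (Real.sqrt_nonneg _)

lemma Snorm_lt_of_apply_zero_eq_zero {γ : ℕ → ℝ} (h₀ : γ 0 = 0) {ε : ℝ} (hε : 0 < ε)
    (h : ∑' m, Δ_[1] γ m ^ 2 < ε ^ 2) : Snorm γ < ε := by
  rwa [Snorm, h₀, abs_zero, zero_add, Real.sqrt_lt' hε]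

section SumOfSquares

variable {ι : Type*} {u v : ι → ℝ}

lemma summable_sq_add (hu : Summable (u · ^ 2)) (hv : Summable (v · ^ 2)) :
    Summable fun i ↦ (u i + v i) ^ 2 :=
  .of_nonneg_of_le (fun _ ↦ sq_nonneg _) (fun _ ↦ add_sq_le) ((hu.add hv).mul_left 2)

lemma tsum_sq_add_le (hu : Summable (u · ^ 2)) (hv : Summable (v · ^ 2)) :
    ∑' i, (u i + v i) ^ 2 ≤ 2 * (∑' i, u i ^ 2 + ∑' i, v i ^ 2) := by
  rw [← hu.tsum_add hv, ← tsum_mul_left]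
  exact (summable_sq_add hu hv).tsum_le_tsum (fun _ ↦ add_sq_le) ((hu.add hv).mul_left 2)

end SumOfSquares

lemma summable_sq_fwdDiff_of_summable_sq {α : ℕ → ℝ} (h : Summable (α · ^ 2)) :
    Summable (Δ_[1] α · ^ 2) := by
  simpa only [fwdDiff, sub_eq_add_neg] using
    summable_sq_add (v := fun m ↦ -α m) ((summable_nat_add_iff 1).2 h) (by simpa only [neg_sq])

def tailFrom (N : ℕ) (α : ℕ → ℝ) (m : ℕ) : ℝ := if N ≤ m then α m - α N else 0

section tailFrom

variable {N : ℕ} {α : ℕ → ℝ}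

@[simp] lemma tailFrom_apply_zero : tailFrom N α 0 = 0 := by
  unfold tailFrom
  split_ifs with h
  · rw [Nat.le_zero.1 h, sub_self]
  · rfl

lemma fwdDiff_tailFrom (m : ℕ) :
    Δ_[1] (tailFrom N α) m = if N ≤ m then Δ_[1] α m else 0 := by
  simp only [fwdDiff, tailFrom]
  split_ifs with h₁ h₂ h₂
  · ring
  · obtain rfl : N = m + 1 := by omega
    simp
  · omega
  · ring

lemma hasSum_sq_fwdDiff_tailFrom (hα : Summable (Δ_[1] α · ^ 2)) :
    HasSum (Δ_[1] (tailFrom N α) · ^ 2) (∑' k, Δ_[1] α (k + N) ^ 2) := by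
  rw [← hasSum_nat_add_iff' N]
  have hfirst : ∑ i ∈ Finset.range N, Δ_[1] (tailFrom N α) i ^ 2 = 0 :=
    Finset.sum_eq_zero fun i hi ↦ by
      simp [fwdDiff_tailFrom, (Finset.mem_range.1 hi).not_ge]
  rw [hfirst, sub_zero]
  simpa [fwdDiff_tailFrom] using ((summable_nat_add_iff N).2 hα).hasSum

end tailFrom

noncomputable def ramp (K : ℕ) (m : ℕ) : ℝ := min 1 (m / K)

section ramp

variable {K : ℕ}

@[simp] lemma ramp_apply_zero : ramp K 0 = 0 := by simp [ramp]

lemma ramp_of_le (hK : 0 < K) {m : ℕ} (h : K ≤ m) : ramp K m = 1 :=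
  min_eq_left <| (one_le_div (by positivity)).2 (by exact_mod_cast h)

lemma fwdDiff_ramp (hK : 0 < K) (m : ℕ) :
    Δ_[1] (ramp K) m = if m < K then (K : ℝ)⁻¹ else 0 := by
  split_ifs with h
  · have hle : ∀ j : ℕ, j ≤ K → ramp K j = j / K := fun j hj ↦
      min_eq_right <| (div_le_one (by positivity)).2 (by exact_mod_cast hj)
    simp only [fwdDiff, hle (m + 1) h, hle m h.le]
    push_cast
    ring
  · simp only [fwdDiff, ramp_of_le hK (by omega : K ≤ m + 1), ramp_of_le hK (not_lt.1 h),
      sub_self]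

lemma hasSum_sq_fwdDiff_ramp (hK : 0 < K) :
    HasSum (Δ_[1] (ramp K) · ^ 2) (K : ℝ)⁻¹ := by
  have hsum : ∑ m ∈ Finset.range K, Δ_[1] (ramp K) m ^ 2 = (K : ℝ)⁻¹ := by
    rw [Finset.sum_congr rfl fun m hm ↦ by rw [fwdDiff_ramp hK, if_pos (Finset.mem_range.1 hm)]]
    simp only [inv_pow, Finset.sum_const, Finset.card_range, nsmul_eq_mul]
    field_simp
  exact hsum ▸ hasSum_sum_of_ne_finset_zero fun m hm ↦ by
    simp [fwdDiff_ramp hK, Finset.mem_range.not.1 hm]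

end ramp

theorem exists_summable_sq_Snorm_sub_lt {α : ℕ → ℝ} (hα : Summable (Δ_[1] α · ^ 2)) {ε : ℝ}
    (hε : 0 < ε) : ∃ β : ℕ → ℝ, Summable (β · ^ 2) ∧ Snorm (fun m ↦ α m - β m) < ε := by
  have hε4 : 0 < ε ^ 2 / 4 := by positivity
  obtain ⟨N, hN⟩ : ∃ N, ∑' k, Δ_[1] α (k + N) ^ 2 < ε ^ 2 / 4 :=
    ((tendsto_sum_nat_add (Δ_[1] α · ^ 2)).eventually (gt_mem_nhds hε4)).exists
  obtain ⟨K, hK, hK₀⟩ : ∃ K : ℕ, α N ^ 2 / K < ε ^ 2 / 4 ∧ 0 < K :=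
    (((tendsto_const_div_atTop_nhds_zero_nat _).eventually (gt_mem_nhds hε4)).and
      (eventually_gt_atTop 0)).exists
  set γ := tailFrom N α + α N • ramp K
  refine ⟨α - γ, ?_, ?_⟩
  · refine summable_of_ne_finset_zero (s := Finset.range (N + K)) fun m hm ↦ ?_
    have hm : N + K ≤ m := by simpa using hm
    simp [γ, tailFrom, if_pos (by omega : N ≤ m), ramp_of_le hK₀ (by omega : K ≤ m)]
  simp only [Pi.sub_apply, sub_sub_cancel]
  refine Snorm_lt_of_apply_zero_eq_zero (by simp [γ]) hε ?_
  have htail := hasSum_sq_fwdDiff_tailFrom (N := N) hα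
  have hramp := (hasSum_sq_fwdDiff_ramp hK₀).mul_left (α N ^ 2)
  simp only [← mul_pow] at hramp
  calc ∑' m, Δ_[1] γ m ^ 2
      = ∑' m, (Δ_[1] (tailFrom N α) m + α N * Δ_[1] (ramp K) m) ^ 2 := by
        simp [γ, fwdDiff_add, fwdDiff_const_smul]
    _ ≤ 2 * (∑' k, Δ_[1] α (k + N) ^ 2 + α N ^ 2 * (K : ℝ)⁻¹) := by
        simpa only [htail.tsum_eq, hramp.tsum_eq] using
          tsum_sq_add_le htail.summable hramp.summable
    _ < ε ^ 2 := by
        rw [← div_eq_mul_inv]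
        linarith

theorem exists_seq_summable_sq_tendsto_Snorm_sub {α : ℕ → ℝ} (hα : Summable (Δ_[1] α · ^ 2)) :
    ∃ β : ℕ → ℕ → ℝ, (∀ n, Summable (β n · ^ 2)) ∧
      Tendsto (fun n ↦ Snorm fun m ↦ α m - β n m) atTop (𝓝 0) := by
  choose β hβ hβα using fun n : ℕ ↦
    exists_summable_sq_Snorm_sub_lt hα (Nat.one_div_pos_of_nat (n := n))
  exact ⟨β, hβ, squeeze_zero (fun n ↦ Snorm_nonneg _) (fun n ↦ (hβα n).le)
    tendsto_one_div_add_atTop_nhds_zero_nat⟩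

/-- Lemma 3.4(c), critical case `λ = 1`: `ℓ² ⊆ S`, `ℓ²` is dense in `S` for the `S`-norm,
but `ℓ²` is not closed in `S`: some `α ∈ S \ ℓ²` is an `S`-norm limit of `ℓ²` sequences. -/
theorem stmt_18 :
    (∀ α : ℕ → ℝ, Summable (fun m => (α m) ^ 2) →
      Summable (fun m => (α (m + 1) - α m) ^ 2)) ∧
    (∀ α : ℕ → ℝ, Summable (fun m => (α (m + 1) - α m) ^ 2) →
      ∀ ε > 0, ∃ β : ℕ → ℝ, Summable (fun m => (β m) ^ 2) ∧
        Snorm (fun m => α m - β m) < ε) ∧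
    (∃ α : ℕ → ℝ, Summable (fun m => (α (m + 1) - α m) ^ 2) ∧
      ¬ Summable (fun m => (α m) ^ 2) ∧
      ∃ β : ℕ → ℕ → ℝ, (∀ n, Summable (fun m => (β n m) ^ 2)) ∧
        Filter.Tendsto (fun n => Snorm (fun m => α m - β n m)) Filter.atTop (nhds 0)) := by
  have hconst : Summable (Δ_[1] (fun _ ↦ (1 : ℝ)) · ^ 2) := by simp
  refine ⟨fun α ↦ summable_sq_fwdDiff_of_summable_sq,
    fun α hα ε ↦ exists_summable_sq_Snorm_sub_lt hα,
    ⟨fun _ ↦ 1, hconst, by simp [summable_const_iff],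
      exists_seq_summable_sq_tendsto_Snorm_sub hconst⟩⟩
end
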